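/- The plug-in CCDI estimator can be decomposed as an empirical average plus a signed combination of four relative entropies: Î_n^{(k)}(X→Y‖Z) = (1/n) Σ_{i=1}^n log[ P(X_{i-k}^i, Y_i | Y_{i-k}^{i-1}, Z_{i-k}^i) / ( P(Y_i | Y_{i-k}^{i-1}, Z_{i-k}^i) P(X_{i-k}^i | Y_{i-k}^{i-1}, Z_{i-k}^i) ) ] + D(P̂_{Y_{-k}^{-1},Z_{-k}^0,n} ‖ P_{Ȳ_{-k}^{-1},Z̄_{-k}^0}) + D(P̂_{X_{-k}^0,Y_{-k}^0,Z_{-k}^0,n} ‖ P_{X̄_{-k}^0,Ȳ_{-k}^0,Z̄_{-k}^0}) − D(P̂_{Y_{-k}^0,Z_{-k}^0,n} ‖ P_{Ȳ_{-k}^0,Z̄_{-k}^0}) − D(P̂_{X_{-k}^0,Y_{-k}^{-1},Z_{-k}^0,n} ‖ P_{X̄_{-k}^0,Ȳ_{-k}^{-1},Z̄_{-k}^0}). -/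

import Mathlib

open MeasureTheory Real Filter Topology

namespace CCDI

variable {Ω : Type*} [MeasurableSpace Ω]

/-- The probability of an event as a real number. -/
noncomputable def pr (μ : Measure Ω) (s : Set Ω) : ℝ := (μ s).toReal

/-- Shannon entropy (natural log) of a finite-valued random variable. -/
noncomputable def entH {S : Type*} [Fintype S] (μ : Measure Ω) (X : Ω → S) : ℝ :=
  -∑ s : S, pr μ (X ⁻¹' {s}) * Real.log (pr μ (X ⁻¹' {s}))

/-- Conditional Shannon entropy `H(X | Y) = H(X, Y) - H(Y)`. -/
noncomputable def condH {S T : Type*} [Fintype S] [Fintype T]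
    (μ : Measure Ω) (X : Ω → S) (Y : Ω → T) : ℝ :=
  entH μ (fun ω => (X ω, Y ω)) - entH μ Y

/-- Conditional mutual information `I(X ; Y | Z) = H(X|Z) + H(Y|Z) - H(X,Y|Z)`. -/
noncomputable def cmi {S T U : Type*} [Fintype S] [Fintype T] [Fintype U]
    (μ : Measure Ω) (X : Ω → S) (Y : Ω → T) (Z : Ω → U) : ℝ :=
  condH μ X Z + condH μ Y Z - condH μ (fun ω => (X ω, Y ω)) Z

/-- `X` and `Y` are conditionally independent given `Z`. -/
def CondIndep {S T U : Type*} (μ : Measure Ω) (X : Ω → S) (Y : Ω → T) (Z : Ω → U) : Prop :=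
  ∀ (x : S) (y : T) (z : U),
    pr μ (X ⁻¹' {x} ∩ Y ⁻¹' {y} ∩ Z ⁻¹' {z}) * pr μ (Z ⁻¹' {z}) =
      pr μ (X ⁻¹' {x} ∩ Z ⁻¹' {z}) * pr μ (Y ⁻¹' {y} ∩ Z ⁻¹' {z})

/-- The block `X_1^m` of a process indexed by positive times. -/
def blk1 {S : Type*} (X : ℕ → Ω → S) (m : ℕ) : Ω → Fin m → S :=
  fun ω j => X ((j : ℕ) + 1) ω

/-- The block `X_a^{a+m-1}` of a two-sided process. -/
def blkZ {S : Type*} (X : ℤ → Ω → S) (a : ℤ) (m : ℕ) : Ω → Fin m → S :=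
  fun ω j => X (a + (j : ℕ)) ω

/-- Directed information `I(X_1^n → Y_1^n) = ∑_{i=1}^n I(X_1^i ; Y_i | Y_1^{i-1})`. -/
noncomputable def DI {A B : Type*} [Fintype A] [Fintype B]
    (μ : Measure Ω) (X : ℕ → Ω → A) (Y : ℕ → Ω → B) (n : ℕ) : ℝ :=
  ∑ i ∈ Finset.range n, cmi μ (blk1 X (i + 1)) (Y (i + 1)) (blk1 Y i)

/-- Causal conditional directed information
`I(X_1^n → Y_1^n ‖ Z_1^n) = ∑_{i=1}^n I(X_1^i ; Y_i | Y_1^{i-1}, Z_1^i)`. -/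
noncomputable def ccdi1 {A B C : Type*} [Fintype A] [Fintype B] [Fintype C]
    (μ : Measure Ω) (X : ℕ → Ω → A) (Y : ℕ → Ω → B) (Z : ℕ → Ω → C) (n : ℕ) : ℝ :=
  ∑ i ∈ Finset.range n,
    cmi μ (blk1 X (i + 1)) (Y (i + 1)) (fun ω => (blk1 Y i ω, blk1 Z (i + 1) ω))

/-- CCDI for a two-sided process, over times `1,…,n`. -/
noncomputable def ccdiZ {A B C : Type*} [Fintype A] [Fintype B] [Fintype C]
    (μ : Measure Ω) (X : ℤ → Ω → A) (Y : ℤ → Ω → B) (Z : ℤ → Ω → C) (n : ℕ) : ℝ :=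
  ∑ i ∈ Finset.range n,
    cmi μ (blkZ X 1 (i + 1)) (Y ((i : ℤ) + 1)) (fun ω => (blkZ Y 1 i ω, blkZ Z 1 (i + 1) ω))

/-- Stationarity of a (two-sided) process: the law of every finite window is
translation-invariant. -/
def Stationary {S : Type*} (μ : Measure Ω) (W : ℤ → Ω → S) : Prop :=
  ∀ (m : ℕ) (t : ℤ) (w : Fin m → S),
    pr μ {ω | ∀ j : Fin m, W (t + (j : ℕ)) ω = w j} =
      pr μ {ω | ∀ j : Fin m, W ((j : ℕ) : ℤ) ω = w j}

/-- The process `W` is a Markov chain of order at most `k`: `W_n` is conditionally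
independent of any block of the past before time `n-k`, given `W_{n-k}^{n-1}`. -/
def MarkovOrder {S : Type*} (μ : Measure Ω) (W : ℤ → Ω → S) (k : ℕ) : Prop :=
  ∀ (n : ℤ) (m : ℕ),
    CondIndep μ (W n) (fun ω (j : Fin m) => W (n - (k : ℤ) - (m : ℤ) + (j : ℕ)) ω)
      (fun ω (j : Fin k) => W (n - (k : ℤ) + (j : ℕ)) ω)

/-- The empirical (uniform) measure on sample indices `{0,…,n-1}`. -/
noncomputable def empμ (n : ℕ) : Measure (Fin n) := ((n : ENNReal))⁻¹ • Measure.count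

/-- The plug-in estimator `Î_n^{(k)}(X → Y ‖ Z)` computed from a sample path:
the conditional mutual information `I(Y_0 ; X_{-k}^0 | Y_{-k}^{-1}, Z_{-k}^0)` under the
empirical distribution of the overlapping `(k+1)`-blocks at times `1,…,n`. -/
noncomputable def plugIn {A B C : Type*} [Fintype A] [Fintype B] [Fintype C]
    (k n : ℕ) (x : ℤ → A) (y : ℤ → B) (z : ℤ → C) : ℝ :=
  cmi (empμ n) (fun i : Fin n => y ((i : ℤ) + 1))
    (fun (i : Fin n) (j : Fin (k + 1)) => x ((i : ℤ) + 1 - (k : ℤ) + (j : ℕ)))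
    (fun i : Fin n =>
      ((fun j : Fin k => y ((i : ℤ) + 1 - (k : ℤ) + (j : ℕ))),
       (fun j : Fin (k + 1) => z ((i : ℤ) + 1 - (k : ℤ) + (j : ℕ)))))

/-- The plug-in estimator evaluated on the sample path of the processes at `ω`. -/
noncomputable def plugInP {A B C : Type*} [Fintype A] [Fintype B] [Fintype C]
    (k n : ℕ) (X : ℤ → Ω → A) (Y : ℤ → Ω → B) (Z : ℤ → Ω → C) (ω : Ω) : ℝ :=
  plugIn k n (fun t => X t ω) (fun t => Y t ω) (fun t => Z t ω)

/-- The probability mass function of `f` under `μ`. -/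
noncomputable def pmfOf {S : Type*} (μ : Measure Ω) (f : Ω → S) : S → ℝ :=
  fun s => pr μ (f ⁻¹' {s})

/-- Relative entropy (KL divergence) between two pmfs on a finite set. -/
noncomputable def Dkl {S : Type*} [Fintype S] (P Q : S → ℝ) : ℝ :=
  ∑ s : S, P s * Real.log (P s / Q s)

/-- Shannon entropy of a pmf on a finite set. -/
noncomputable def entP {S : Type*} [Fintype S] (P : S → ℝ) : ℝ :=
  -∑ s : S, P s * Real.log (P s)

/-- The process `W` is time-homogeneous with `k`-th order transition function `Q`. -/
def HomMarkov {S : Type*} (μ : Measure Ω) (W : ℤ → Ω → S) (k : ℕ)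
    (Q : (Fin k → S) → S → ℝ) : Prop :=
  ∀ (n : ℤ) (w : Fin k → S) (s : S),
    pr μ ({ω | ∀ j : Fin k, W (n - (k : ℤ) + (j : ℕ)) ω = w j} ∩ {ω | W n ω = s}) =
      Q w s * pr μ {ω | ∀ j : Fin k, W (n - (k : ℤ) + (j : ℕ)) ω = w j}

open scoped Classical in
/-- The transition matrix of the lifted (first order) chain of `k`-blocks induced by a
`k`-th order transition function `Q`. -/
noncomputable def Qlift {S : Type*} (k : ℕ) (Q : (Fin k → S) → S → ℝ) :
    Matrix (Fin k → S) (Fin k → S) ℝ :=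
  fun u v =>
    if h : (∀ (i : Fin k) (hi : (i : ℕ) + 1 < k), v i = u ⟨(i : ℕ) + 1, hi⟩) ∧ 0 < k then
      Q u (v ⟨k - 1, Nat.sub_lt h.2 Nat.one_pos⟩)
    else 0

/-- Irreducibility and aperiodicity of a `k`-th order transition function, expressed as
primitivity of the lifted block-transition matrix. -/
def Primitive {S : Type*} [Fintype S] [DecidableEq S] (k : ℕ)
    (Q : (Fin k → S) → S → ℝ) : Prop :=
  ∃ N : ℕ, ∀ u v : Fin k → S, 0 < (Qlift k Q ^ N) u v


variable {A B C : Type*}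

/-- The sample value of the full `(k+1)`-block `(X_{i+1-k}^{i+1}, Y_{i+1-k}^{i+1}, Z_{i+1-k}^{i+1})`. -/
def fullVal (k : ℕ) (x : ℤ → A) (y : ℤ → B) (z : ℤ → C) (i : ℕ) :
    (Fin (k + 1) → A) × (Fin (k + 1) → B) × (Fin (k + 1) → C) :=
  ((fun j => x ((i : ℤ) + 1 - (k : ℤ) + (j : ℕ))),
   (fun j => y ((i : ℤ) + 1 - (k : ℤ) + (j : ℕ))),
   (fun j => z ((i : ℤ) + 1 - (k : ℤ) + (j : ℕ))))

/-- The sample value of the block `(Y_{i+1-k}^{i}, Z_{i+1-k}^{i+1})` (past of `Y`, full `Z`). -/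
def pzVal (k : ℕ) (y : ℤ → B) (z : ℤ → C) (i : ℕ) :
    (Fin k → B) × (Fin (k + 1) → C) :=
  ((fun j => y ((i : ℤ) + 1 - (k : ℤ) + (j : ℕ))),
   (fun j => z ((i : ℤ) + 1 - (k : ℤ) + (j : ℕ))))

/-- The sample value of the block `(Y_{i+1-k}^{i+1}, Z_{i+1-k}^{i+1})`. -/
def yzVal (k : ℕ) (y : ℤ → B) (z : ℤ → C) (i : ℕ) :
    (Fin (k + 1) → B) × (Fin (k + 1) → C) :=
  ((fun j => y ((i : ℤ) + 1 - (k : ℤ) + (j : ℕ))),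
   (fun j => z ((i : ℤ) + 1 - (k : ℤ) + (j : ℕ))))

/-- The sample value of the block `(X_{i+1-k}^{i+1}, Y_{i+1-k}^{i}, Z_{i+1-k}^{i+1})`. -/
def xpzVal (k : ℕ) (x : ℤ → A) (y : ℤ → B) (z : ℤ → C) (i : ℕ) :
    (Fin (k + 1) → A) × (Fin k → B) × (Fin (k + 1) → C) :=
  ((fun j => x ((i : ℤ) + 1 - (k : ℤ) + (j : ℕ))),
   (fun j => y ((i : ℤ) + 1 - (k : ℤ) + (j : ℕ))),
   (fun j => z ((i : ℤ) + 1 - (k : ℤ) + (j : ℕ))))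

/-- The sample value of the conditioning window `(X_{i+1-k}^{i}, Y_{i+1-k}^{i}, Z_{i+1-k}^{i})`. -/
def winVal (k : ℕ) (x : ℤ → A) (y : ℤ → B) (z : ℤ → C) (i : ℕ) :
    (Fin k → A) × (Fin k → B) × (Fin k → C) :=
  ((fun j => x ((i : ℤ) + 1 - (k : ℤ) + (j : ℕ))),
   (fun j => y ((i : ℤ) + 1 - (k : ℤ) + (j : ℕ))),
   (fun j => z ((i : ℤ) + 1 - (k : ℤ) + (j : ℕ))))

/-- The sample value of the current symbol `(X_{i+1}, Y_{i+1}, Z_{i+1})`. -/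
def ptVal (x : ℤ → A) (y : ℤ → B) (z : ℤ → C) (i : ℕ) : A × B × C :=
  (x ((i : ℤ) + 1), y ((i : ℤ) + 1), z ((i : ℤ) + 1))

/-- The stationary full `(k+1)`-block `(X_{-k}^0, Y_{-k}^0, Z_{-k}^0)` as a random variable. -/
def statFullMap {Ω : Type*} (X : ℤ → Ω → A) (Y : ℤ → Ω → B) (Z : ℤ → Ω → C) (k : ℕ) :
    Ω → (Fin (k + 1) → A) × (Fin (k + 1) → B) × (Fin (k + 1) → C) :=
  fun ω => (blkZ X (-(k : ℤ)) (k + 1) ω, blkZ Y (-(k : ℤ)) (k + 1) ω, blkZ Z (-(k : ℤ)) (k + 1) ω)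

/-- The stationary block `(Y_{-k}^{-1}, Z_{-k}^0)` as a random variable. -/
def statPZMap {Ω : Type*} (Y : ℤ → Ω → B) (Z : ℤ → Ω → C) (k : ℕ) :
    Ω → (Fin k → B) × (Fin (k + 1) → C) :=
  fun ω => (blkZ Y (-(k : ℤ)) k ω, blkZ Z (-(k : ℤ)) (k + 1) ω)

/-- The stationary block `(Y_{-k}^0, Z_{-k}^0)` as a random variable. -/
def statYZMap {Ω : Type*} (Y : ℤ → Ω → B) (Z : ℤ → Ω → C) (k : ℕ) :
    Ω → (Fin (k + 1) → B) × (Fin (k + 1) → C) :=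
  fun ω => (blkZ Y (-(k : ℤ)) (k + 1) ω, blkZ Z (-(k : ℤ)) (k + 1) ω)

/-- The stationary block `(X_{-k}^0, Y_{-k}^{-1}, Z_{-k}^0)` as a random variable. -/
def statXPZMap {Ω : Type*} (X : ℤ → Ω → A) (Y : ℤ → Ω → B) (Z : ℤ → Ω → C) (k : ℕ) :
    Ω → (Fin (k + 1) → A) × (Fin k → B) × (Fin (k + 1) → C) :=
  fun ω => (blkZ X (-(k : ℤ)) (k + 1) ω, blkZ Y (-(k : ℤ)) k ω, blkZ Z (-(k : ℤ)) (k + 1) ω)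

section Aux

lemma entH_eq_entP {S : Type*} [Fintype S] (μ : Measure Ω) (f : Ω → S) :
    entH μ f = entP (pmfOf μ f) := rfl

lemma entH_comp_inj {S T : Type*} [Fintype S] [Fintype T] (μ : Measure Ω) (f : Ω → S)
    (g : S → T) (hg : Function.Injective g) :
    entH μ (fun ω => g (f ω)) = entH μ f := by
  classical
  unfold entH
  congr 1
  have hpre : ∀ s : S, (fun ω => g (f ω)) ⁻¹' {g s} = f ⁻¹' {s} := by
    intro s; ext ω; simp [hg.eq_iff]
  rw [← Finset.sum_subset (Finset.subset_univ (Finset.univ.image g))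
      (fun t _ ht => ?_)]
  · rw [Finset.sum_image (fun a _ b _ h => hg h)]
    exact Finset.sum_congr rfl fun s _ => by rw [hpre s]
  · have : (fun ω => g (f ω)) ⁻¹' {t} = ∅ := by
      ext ω
      simp only [Set.mem_preimage, Set.mem_singleton_iff, Set.mem_empty_iff_false, iff_false]
      exact fun h => ht (Finset.mem_image.mpr ⟨f ω, Finset.mem_univ _, h⟩)
    simp [pr, this]

lemma Dkl_expand {S : Type*} [Fintype S] (P Q : S → ℝ) (hQ : ∀ s, Q s ≠ 0) :
    Dkl P Q = -entP P - ∑ s : S, P s * Real.log (Q s) := by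
  unfold Dkl entP
  rw [neg_neg, ← Finset.sum_sub_distrib]
  refine Finset.sum_congr rfl fun s _ => ?_
  rcases eq_or_ne (P s) 0 with h | h
  · simp [h]
  · rw [Real.log_div h (hQ s)]; ring

lemma emp_sum {S : Type*} [Fintype S] (n : ℕ) (f : Fin n → S) (L : S → ℝ) :
    ∑ s : S, pmfOf (empμ n) f s * L s = (1 / (n : ℝ)) * ∑ i : Fin n, L (f i) := by
  classical
  have hp : ∀ s, pmfOf (empμ n) f s
      = ((Finset.univ.filter (fun i => f i = s)).card : ℝ) / n := by
    intro s
    unfold pmfOf pr empμ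
    rw [Measure.smul_apply, Measure.count_apply_finite _ (Set.toFinite _), smul_eq_mul,
      ENNReal.toReal_mul]
    have : (Set.toFinite (f ⁻¹' {s})).toFinset = Finset.univ.filter (fun i => f i = s) := by
      ext i; simp
    simp [this, ENNReal.toReal_inv, div_eq_inv_mul]
  have key : ∑ i : Fin n, L (f i)
      = ∑ s : S, ((Finset.univ.filter (fun i => f i = s)).card : ℝ) * L s := by
    rw [← Finset.sum_fiberwise Finset.univ f (fun i => L (f i))]
    refine Finset.sum_congr rfl fun s _ => ?_
    rw [Finset.sum_congr rfl (fun i hi => by rw [(Finset.mem_filter.mp hi).2]),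
      Finset.sum_const, nsmul_eq_mul]
  rw [key, Finset.mul_sum]
  exact Finset.sum_congr rfl fun s _ => by rw [hp s]; ring

lemma pmfOf_comp_pos {S T : Type*} (μ : Measure Ω) [IsFiniteMeasure μ] (f : Ω → S) (g : S → T)
    {v : S} (hv : 0 < pmfOf μ f v) : 0 < pmfOf μ (fun ω => g (f ω)) (g v) := by
  refine lt_of_lt_of_le hv ?_
  exact ENNReal.toReal_mono (measure_ne_top μ _)
    (measure_mono (fun ω h => by
      simp only [Set.mem_preimage, Set.mem_singleton_iff] at h ⊢; rw [h]))

end Aux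

set_option maxHeartbeats 2000000 in
/-- Decomposition of the plug-in CCDI estimator as an empirical average of
log-likelihood ratios of the stationary law plus a signed combination of four relative
entropies between empirical and stationary block distributions. -/
theorem plugIn_eq_empirical_average_add_relative_entropies
    {Ω A B C : Type*} [MeasurableSpace Ω]
    [Fintype A] [Fintype B] [Fintype C]
    (μ : Measure Ω) [IsProbabilityMeasure μ]
    (X : ℤ → Ω → A) (Y : ℤ → Ω → B) (Z : ℤ → Ω → C)
    (hstat : Stationary μ (fun t ω => (X t ω, Y t ω, Z t ω)))
    (k n : ℕ) (hk : 1 ≤ k) (hn : 1 ≤ n)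
    (x : ℤ → A) (y : ℤ → B) (z : ℤ → C)
    (hpos : ∀ v, 0 < pmfOf μ (statFullMap X Y Z k) v) :
    plugIn k n x y z =
      (1 / (n : ℝ)) * (∑ i ∈ Finset.range n, Real.log
        ((pmfOf μ (statFullMap X Y Z k) (fullVal k x y z i) *
            pmfOf μ (statPZMap Y Z k) (pzVal k y z i)) /
          (pmfOf μ (statYZMap Y Z k) (yzVal k y z i) *
            pmfOf μ (statXPZMap X Y Z k) (xpzVal k x y z i))))
      + Dkl (pmfOf (empμ n) (fun i : Fin n => pzVal k y z i)) (pmfOf μ (statPZMap Y Z k))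
      + Dkl (pmfOf (empμ n) (fun i : Fin n => fullVal k x y z i)) (pmfOf μ (statFullMap X Y Z k))
      - Dkl (pmfOf (empμ n) (fun i : Fin n => yzVal k y z i)) (pmfOf μ (statYZMap Y Z k))
      - Dkl (pmfOf (empμ n) (fun i : Fin n => xpzVal k x y z i))
          (pmfOf μ (statXPZMap X Y Z k)) := by
  classical
  -- nonemptiness of the sample space and alphabets
  have hΩ : Nonempty Ω := by
    by_contra h
    rw [not_nonempty_iff] at h
    have h1 : (μ Set.univ) = 1 := measure_univ
    rw [Set.univ_eq_empty_iff.mpr h, measure_empty] at h1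
    exact zero_ne_one h1
  obtain ⟨ω0⟩ := hΩ
  set a0 : A := X 0 ω0 with ha0
  set b0 : B := Y 0 ω0 with hb0
  -- positivity of the stationary marginals
  have hPpz_pos : ∀ w, 0 < pmfOf μ (statPZMap Y Z k) w := by
    rintro ⟨yb, zc⟩
    have h := pmfOf_comp_pos μ (statFullMap X Y Z k)
      (fun p : (Fin (k+1) → A) × (Fin (k+1) → B) × (Fin (k+1) → C) =>
        ((Fin.init p.2.1, p.2.2) : (Fin k → B) × (Fin (k+1) → C)))
      (hpos ((fun _ => a0), Fin.snoc yb b0, zc))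
    simp [Fin.init_snoc] at h; exact h
  have hPyz_pos : ∀ w, 0 < pmfOf μ (statYZMap Y Z k) w := by
    rintro ⟨yb, zc⟩
    have h := pmfOf_comp_pos μ (statFullMap X Y Z k)
      (fun p : (Fin (k+1) → A) × (Fin (k+1) → B) × (Fin (k+1) → C) =>
        ((p.2.1, p.2.2) : (Fin (k+1) → B) × (Fin (k+1) → C)))
      (hpos ((fun _ => a0), yb, zc))
    simp at h; exact h
  have hPxpz_pos : ∀ w, 0 < pmfOf μ (statXPZMap X Y Z k) w := by
    rintro ⟨xa, yb, zc⟩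
    have h := pmfOf_comp_pos μ (statFullMap X Y Z k)
      (fun p : (Fin (k+1) → A) × (Fin (k+1) → B) × (Fin (k+1) → C) =>
        ((p.1, Fin.init p.2.1, p.2.2) : (Fin (k+1) → A) × (Fin k → B) × (Fin (k+1) → C)))
      (hpos (xa, Fin.snoc yb b0, zc))
    simp [Fin.init_snoc] at h; exact h
  -- the plug-in estimator as a combination of empirical block entropies
  have hgyz : Function.Injective
      (fun p : (Fin (k+1) → B) × (Fin (k+1) → C) =>
        (p.1 (Fin.last k), (Fin.init p.1, p.2))) := by
    intro p q h
    have := congrArg (fun q : B × ((Fin k → B) × (Fin (k+1) → C)) =>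
      ((Fin.snoc q.2.1 q.1 : Fin (k+1) → B), q.2.2)) h
    simpa [Fin.snoc_init_self] using this
  have hgfull : Function.Injective
      (fun p : (Fin (k+1) → A) × (Fin (k+1) → B) × (Fin (k+1) → C) =>
        ((p.2.1 (Fin.last k), p.1), (Fin.init p.2.1, p.2.2))) := by
    intro p q h
    have := congrArg (fun q : (B × (Fin (k+1) → A)) × ((Fin k → B) × (Fin (k+1) → C)) =>
      (q.1.2, (Fin.snoc q.2.1 q.1.1 : Fin (k+1) → B), q.2.2)) h
    simpa [Fin.snoc_init_self] using this
  have e_yz : entH (empμ n) (fun i : Fin n => (y ((i:ℤ)+1),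
        ((fun j : Fin k => y ((i:ℤ)+1-(k:ℤ)+(j:ℕ))),
         (fun j : Fin (k+1) => z ((i:ℤ)+1-(k:ℤ)+(j:ℕ))))))
      = entP (pmfOf (empμ n) (fun i : Fin n => yzVal k y z i)) := by
    have hfe : (fun i : Fin n => (y ((i:ℤ)+1),
        ((fun j : Fin k => y ((i:ℤ)+1-(k:ℤ)+(j:ℕ))),
         (fun j : Fin (k+1) => z ((i:ℤ)+1-(k:ℤ)+(j:ℕ))))))
        = fun i : Fin n =>
          (fun p : (Fin (k+1) → B) × (Fin (k+1) → C) =>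
            (p.1 (Fin.last k), (Fin.init p.1, p.2))) (yzVal k y z i) := by
      funext i
      simp only [yzVal, Fin.init]
      congr 1
      · congr 1
        simp only [Fin.val_last]
        omega
    rw [hfe]
    have h := entH_comp_inj (empμ n) (fun i : Fin n => yzVal k y z i)
      (fun p : (Fin (k+1) → B) × (Fin (k+1) → C) =>
        (p.1 (Fin.last k), (Fin.init p.1, p.2))) hgyz
    rw [h]
    rfl
  have e_full : entH (empμ n) (fun i : Fin n =>
        ((y ((i:ℤ)+1), (fun j : Fin (k+1) => x ((i:ℤ)+1-(k:ℤ)+(j:ℕ)))),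
         ((fun j : Fin k => y ((i:ℤ)+1-(k:ℤ)+(j:ℕ))),
          (fun j : Fin (k+1) => z ((i:ℤ)+1-(k:ℤ)+(j:ℕ))))))
      = entP (pmfOf (empμ n) (fun i : Fin n => fullVal k x y z i)) := by
    have hfe : (fun i : Fin n =>
        ((y ((i:ℤ)+1), (fun j : Fin (k+1) => x ((i:ℤ)+1-(k:ℤ)+(j:ℕ)))),
         ((fun j : Fin k => y ((i:ℤ)+1-(k:ℤ)+(j:ℕ))),
          (fun j : Fin (k+1) => z ((i:ℤ)+1-(k:ℤ)+(j:ℕ))))))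
        = fun i : Fin n =>
          (fun p : (Fin (k+1) → A) × (Fin (k+1) → B) × (Fin (k+1) → C) =>
            ((p.2.1 (Fin.last k), p.1), (Fin.init p.2.1, p.2.2))) (fullVal k x y z i) := by
      funext i
      simp only [fullVal, Fin.init]
      have harith : ((i:ℤ)+1-(k:ℤ)+(((Fin.last k) : ℕ) : ℤ)) = (i:ℤ)+1 := by
        simp only [Fin.val_last]; omega
      rw [harith]
      rfl
    rw [hfe]
    have h := entH_comp_inj (empμ n) (fun i : Fin n => fullVal k x y z i)
      (fun p : (Fin (k+1) → A) × (Fin (k+1) → B) × (Fin (k+1) → C) =>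
        ((p.2.1 (Fin.last k), p.1), (Fin.init p.2.1, p.2.2))) hgfull
    rw [h]
    rfl
  have hLHS : plugIn k n x y z
      = entP (pmfOf (empμ n) (fun i : Fin n => yzVal k y z i))
      + entP (pmfOf (empμ n) (fun i : Fin n => xpzVal k x y z i))
      - entP (pmfOf (empμ n) (fun i : Fin n => fullVal k x y z i))
      - entP (pmfOf (empμ n) (fun i : Fin n => pzVal k y z i)) := by
    show entH (empμ n) (fun i : Fin n => (y ((i:ℤ)+1),
          ((fun j : Fin k => y ((i:ℤ)+1-(k:ℤ)+(j:ℕ))),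
           (fun j : Fin (k+1) => z ((i:ℤ)+1-(k:ℤ)+(j:ℕ))))))
        - entH (empμ n) (fun i : Fin n =>
          ((fun j : Fin k => y ((i:ℤ)+1-(k:ℤ)+(j:ℕ))),
           (fun j : Fin (k+1) => z ((i:ℤ)+1-(k:ℤ)+(j:ℕ)))))
        + (entH (empμ n) (fun i : Fin n =>
            ((fun j : Fin (k+1) => x ((i:ℤ)+1-(k:ℤ)+(j:ℕ))),
             ((fun j : Fin k => y ((i:ℤ)+1-(k:ℤ)+(j:ℕ))),
              (fun j : Fin (k+1) => z ((i:ℤ)+1-(k:ℤ)+(j:ℕ))))))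
          - entH (empμ n) (fun i : Fin n =>
            ((fun j : Fin k => y ((i:ℤ)+1-(k:ℤ)+(j:ℕ))),
             (fun j : Fin (k+1) => z ((i:ℤ)+1-(k:ℤ)+(j:ℕ))))))
        - (entH (empμ n) (fun i : Fin n =>
            ((y ((i:ℤ)+1), (fun j : Fin (k+1) => x ((i:ℤ)+1-(k:ℤ)+(j:ℕ)))),
             ((fun j : Fin k => y ((i:ℤ)+1-(k:ℤ)+(j:ℕ))),
              (fun j : Fin (k+1) => z ((i:ℤ)+1-(k:ℤ)+(j:ℕ))))))
          - entH (empμ n) (fun i : Fin n =>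
            ((fun j : Fin k => y ((i:ℤ)+1-(k:ℤ)+(j:ℕ))),
             (fun j : Fin (k+1) => z ((i:ℤ)+1-(k:ℤ)+(j:ℕ))))))
        = entP (pmfOf (empμ n) (fun i : Fin n => yzVal k y z i))
        + entP (pmfOf (empμ n) (fun i : Fin n => xpzVal k x y z i))
        - entP (pmfOf (empμ n) (fun i : Fin n => fullVal k x y z i))
        - entP (pmfOf (empμ n) (fun i : Fin n => pzVal k y z i))
    have e_pz : entH (empμ n) (fun i : Fin n =>
        ((fun j : Fin k => y ((i:ℤ)+1-(k:ℤ)+(j:ℕ))),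
         (fun j : Fin (k+1) => z ((i:ℤ)+1-(k:ℤ)+(j:ℕ)))))
        = entP (pmfOf (empμ n) (fun i : Fin n => pzVal k y z i)) := rfl
    have e_xpz : entH (empμ n) (fun i : Fin n =>
        ((fun j : Fin (k+1) => x ((i:ℤ)+1-(k:ℤ)+(j:ℕ))),
         ((fun j : Fin k => y ((i:ℤ)+1-(k:ℤ)+(j:ℕ))),
          (fun j : Fin (k+1) => z ((i:ℤ)+1-(k:ℤ)+(j:ℕ))))))
        = entP (pmfOf (empμ n) (fun i : Fin n => xpzVal k x y z i)) := rfl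
    rw [e_yz, e_full, e_pz, e_xpz]
    ring
  -- expand the four relative entropies
  have hDpz := Dkl_expand (pmfOf (empμ n) (fun i : Fin n => pzVal k y z i))
    (pmfOf μ (statPZMap Y Z k)) (fun s => (hPpz_pos s).ne')
  have hDfull := Dkl_expand (pmfOf (empμ n) (fun i : Fin n => fullVal k x y z i))
    (pmfOf μ (statFullMap X Y Z k)) (fun s => (hpos s).ne')
  have hDyz := Dkl_expand (pmfOf (empμ n) (fun i : Fin n => yzVal k y z i))
    (pmfOf μ (statYZMap Y Z k)) (fun s => (hPyz_pos s).ne')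
  have hDxpz := Dkl_expand (pmfOf (empμ n) (fun i : Fin n => xpzVal k x y z i))
    (pmfOf μ (statXPZMap X Y Z k)) (fun s => (hPxpz_pos s).ne')
  -- empirical sums of log-probabilities
  have hSpz : ∑ s, pmfOf (empμ n) (fun i : Fin n => pzVal k y z i) s
        * Real.log (pmfOf μ (statPZMap Y Z k) s)
      = (1 / (n : ℝ)) * ∑ i ∈ Finset.range n,
        Real.log (pmfOf μ (statPZMap Y Z k) (pzVal k y z i)) := by
    rw [emp_sum n (fun i : Fin n => pzVal k y z i)
      (fun s => Real.log (pmfOf μ (statPZMap Y Z k) s)),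
      Fin.sum_univ_eq_sum_range (fun i => Real.log (pmfOf μ (statPZMap Y Z k) (pzVal k y z i)))]
  have hSfull : ∑ s, pmfOf (empμ n) (fun i : Fin n => fullVal k x y z i) s
        * Real.log (pmfOf μ (statFullMap X Y Z k) s)
      = (1 / (n : ℝ)) * ∑ i ∈ Finset.range n,
        Real.log (pmfOf μ (statFullMap X Y Z k) (fullVal k x y z i)) := by
    rw [emp_sum n (fun i : Fin n => fullVal k x y z i)
      (fun s => Real.log (pmfOf μ (statFullMap X Y Z k) s)),
      Fin.sum_univ_eq_sum_range
        (fun i => Real.log (pmfOf μ (statFullMap X Y Z k) (fullVal k x y z i)))]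
  have hSyz : ∑ s, pmfOf (empμ n) (fun i : Fin n => yzVal k y z i) s
        * Real.log (pmfOf μ (statYZMap Y Z k) s)
      = (1 / (n : ℝ)) * ∑ i ∈ Finset.range n,
        Real.log (pmfOf μ (statYZMap Y Z k) (yzVal k y z i)) := by
    rw [emp_sum n (fun i : Fin n => yzVal k y z i)
      (fun s => Real.log (pmfOf μ (statYZMap Y Z k) s)),
      Fin.sum_univ_eq_sum_range (fun i => Real.log (pmfOf μ (statYZMap Y Z k) (yzVal k y z i)))]
  have hSxpz : ∑ s, pmfOf (empμ n) (fun i : Fin n => xpzVal k x y z i) s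
        * Real.log (pmfOf μ (statXPZMap X Y Z k) s)
      = (1 / (n : ℝ)) * ∑ i ∈ Finset.range n,
        Real.log (pmfOf μ (statXPZMap X Y Z k) (xpzVal k x y z i)) := by
    rw [emp_sum n (fun i : Fin n => xpzVal k x y z i)
      (fun s => Real.log (pmfOf μ (statXPZMap X Y Z k) s)),
      Fin.sum_univ_eq_sum_range
        (fun i => Real.log (pmfOf μ (statXPZMap X Y Z k) (xpzVal k x y z i)))]
  -- split the logarithm of the likelihood ratio
  have havg : ∑ i ∈ Finset.range n, Real.log
        ((pmfOf μ (statFullMap X Y Z k) (fullVal k x y z i) *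
            pmfOf μ (statPZMap Y Z k) (pzVal k y z i)) /
          (pmfOf μ (statYZMap Y Z k) (yzVal k y z i) *
            pmfOf μ (statXPZMap X Y Z k) (xpzVal k x y z i)))
      = (∑ i ∈ Finset.range n,
          Real.log (pmfOf μ (statFullMap X Y Z k) (fullVal k x y z i)))
        + (∑ i ∈ Finset.range n,
          Real.log (pmfOf μ (statPZMap Y Z k) (pzVal k y z i)))
        - (∑ i ∈ Finset.range n,
          Real.log (pmfOf μ (statYZMap Y Z k) (yzVal k y z i)))
        - (∑ i ∈ Finset.range n,
          Real.log (pmfOf μ (statXPZMap X Y Z k) (xpzVal k x y z i))) := by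
    rw [← Finset.sum_add_distrib, ← Finset.sum_sub_distrib, ← Finset.sum_sub_distrib]
    refine Finset.sum_congr rfl fun i _ => ?_
    rw [Real.log_div (mul_ne_zero (hpos _).ne' (hPpz_pos _).ne')
        (mul_ne_zero (hPyz_pos _).ne' (hPxpz_pos _).ne'),
      Real.log_mul (hpos _).ne' (hPpz_pos _).ne',
      Real.log_mul (hPyz_pos _).ne' (hPxpz_pos _).ne']
    ring
  rw [hLHS, hDpz, hDfull, hDyz, hDxpz, hSpz, hSfull, hSyz, hSxpz, havg]
  ring

end CCDI
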